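/- arXiv:1707.01133 — 5 statements merged into one kernel-verified Lean document; each statement's English description precedes it below -/
import Mathlib

section
/- Let p be a prime and let M be a module over the ring ℤ_p of p-adic integers. Let n ≥ 1, let k = (k_1, …, k_n) ∈ ℕⁿ with k ≠ (0,…,0), and let 1 ≤ i ≤ n. Set N = min{ v_p(k_j) : 1 ≤ j ≤ n, k_j ≠ 0 }, where v_p denotes the p-adic valuation on positive integers. If a ∈ K^i(k, M) satisfies d a = 0, then there exists b ∈ K^{i−1}(k, M) with d b = p^N • a. (This is the content of Lemma aff5 of the paper: every closed i-form T^k Σ_{|J|=i} a_J ω_J with coefficients a_J in a ℤ_p-submodule M admits, after multiplication by p^{N(k)}, a primitive of the form T^k Σ_{|J|=i−1} b_J ω_J with coefficients b_J in M.) -/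
/-- The degree-`i` part of the weight-`k` monomial piece of the de Rham complex of the
polynomial ring in `n` variables: families indexed by `i`-element subsets of `Fin n`. -/
abbrev Kform (n i : ℕ) (M : Type*) : Type _ :=
  {s : Finset (Fin n) // s.card = i} → M

/-- The differential of the weight-`k` monomial complex:
`(d a)_L = ∑ₜ (−1)ᵗ · k_{lₜ} • a_{L ∖ {lₜ}}` for `L = {l₀ < l₁ < ⋯ < lᵢ}`. -/
noncomputable def Kd {n : ℕ} {M : Type*} [AddCommGroup M] (k : Fin n → ℕ) {i : ℕ}
    (a : Kform n i M) : Kform n (i + 1) M := fun L =>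
  ∑ j ∈ L.1.attach,
    ((-1 : ℤ) ^ (L.1.filter (fun x => x < j.1)).card * (k j.1 : ℤ)) •
      a ⟨L.1.erase j.1, by rw [Finset.card_erase_of_mem j.2, L.2]; rfl⟩

/-- Koszul contraction homotopy in direction `j`. -/
noncomputable def Khomotopy {n i : ℕ} {M : Type*} [AddCommGroup M] (j : Fin n)
    (a : Kform n (i + 1) M) : Kform n i M := fun J =>
  if h : j ∈ J.1 then 0
  else ((-1 : ℤ) ^ (J.1.filter (fun x => x < j)).card) •
    a ⟨insert j J.1, by rw [Finset.card_insert_of_notMem h, J.2]⟩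

lemma Kd_eq_sum {n i : ℕ} {M : Type*} [AddCommGroup M] (k : Fin n → ℕ) (a : Kform n i M)
    (L : {s : Finset (Fin n) // s.card = i + 1}) :
    Kd k a L = ∑ l ∈ L.1, (if h : l ∈ L.1 then
      ((-1 : ℤ) ^ (L.1.filter (fun x => x < l)).card * (k l : ℤ)) •
        a ⟨L.1.erase l, by rw [Finset.card_erase_of_mem h, L.2]; rfl⟩ else 0) := by
  rw [← Finset.sum_attach L.1 (fun l => if h : l ∈ L.1 then
      ((-1 : ℤ) ^ (L.1.filter (fun x => x < l)).card * (k l : ℤ)) •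
        a ⟨L.1.erase l, by rw [Finset.card_erase_of_mem h, L.2]; rfl⟩ else 0)]
  exact Finset.sum_congr rfl fun x _ => by rw [dif_pos x.2]

lemma Kd_homotopy {n i : ℕ} {M : Type*} [AddCommGroup M] (k : Fin n → ℕ) (j : Fin n)
    (a : Kform n (i + 1) M) (ha : Kd k a = 0) :
    Kd k (Khomotopy j a) = fun L => (k j : ℤ) • a L := by
  funext L
  rw [Kd_eq_sum]
  by_cases hj : j ∈ L.1
  · rw [Finset.sum_eq_single_of_mem j hj ?van]
    case van =>
      intro l hl hne
      rw [dif_pos hl, Khomotopy, dif_pos (Finset.mem_erase.2 ⟨hne.symm, hj⟩), smul_zero]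
    rw [dif_pos hj, Khomotopy]
    have hje : j ∉ L.1.erase j := Finset.notMem_erase j L.1
    rw [dif_neg hje]
    have hfe : (L.1.erase j).filter (fun x => x < j) = L.1.filter (fun x => x < j) := by
      rw [Finset.filter_erase, Finset.erase_eq_of_notMem]
      simp
    have hidx : a ⟨insert j (L.1.erase j), by
        rw [Finset.card_insert_of_notMem hje, Finset.card_erase_of_mem hj, L.2]; rfl⟩ = a L := by
      congr 1
      exact Subtype.ext (Finset.insert_erase hj)
    rw [hfe, hidx, smul_smul]
    congr 1
    set A := (L.1.filter (fun x => x < j)).card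
    have : ((-1 : ℤ) ^ A * (k j : ℤ)) * (-1) ^ A = (-1 : ℤ) ^ (A + A) * (k j : ℤ) := by ring
    rw [this, Even.neg_one_pow ⟨A, rfl⟩, one_mul]
  · -- j ∉ L, use closedness on insert j L
    have hL' : (insert j L.1).card = (i + 1) + 1 := by
      rw [Finset.card_insert_of_notMem hj, L.2]
    have ha' := congrFun ha ⟨insert j L.1, hL'⟩
    rw [Kd_eq_sum, Pi.zero_apply, Finset.sum_insert hj] at ha'
    set σ := (L.1.filter (fun x => x < j)).card with hσ
    have key : ∀ l ∈ L.1,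
        (if h : l ∈ L.1 then
          ((-1 : ℤ) ^ (L.1.filter (fun x => x < l)).card * (k l : ℤ)) •
            Khomotopy j a ⟨L.1.erase l, by rw [Finset.card_erase_of_mem h, L.2]; rfl⟩ else 0)
        = (-(-1 : ℤ) ^ σ) • (if h : l ∈ insert j L.1 then
          ((-1 : ℤ) ^ ((insert j L.1).filter (fun x => x < l)).card * (k l : ℤ)) •
            a ⟨(insert j L.1).erase l, by
              rw [Finset.card_erase_of_mem h, hL']; rfl⟩ else 0) := by
      intro l hl
      have hlj : l ≠ j := fun h => hj (h ▸ hl)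
      have hjel : j ∉ L.1.erase l := fun h => hj (Finset.mem_of_mem_erase h)
      rw [dif_pos hl, dif_pos (Finset.mem_insert_of_mem hl), Khomotopy, dif_neg hjel]
      have hidx : a ⟨insert j (L.1.erase l), by
            rw [Finset.card_insert_of_notMem hjel, Finset.card_erase_of_mem hl, L.2]; rfl⟩
          = a ⟨(insert j L.1).erase l, by
            rw [Finset.card_erase_of_mem (Finset.mem_insert_of_mem hl), hL']; rfl⟩ := by
        congr 1
        exact Subtype.ext (Finset.erase_insert_of_ne hlj.symm).symm
      rw [hidx, smul_smul, smul_smul]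
      congr 1
      set A := (L.1.filter (fun x => x < l)).card with hA
      rcases lt_or_gt_of_ne hlj with hlt | hgt
      · -- l < j
        have hB : σ = ((L.1.erase l).filter (fun x => x < j)).card + 1 := by
          have hmem : l ∈ L.1.filter (fun x => x < j) := Finset.mem_filter.2 ⟨hl, hlt⟩
          rw [Finset.filter_erase]
          exact (Finset.card_erase_add_one hmem).symm
        have hA' : ((insert j L.1).filter (fun x => x < l)).card = A := by
          rw [Finset.filter_insert, if_neg (by exact fun h => absurd (h.trans hlt) (lt_irrefl j))]
        rw [hA', hB]
        ring
      · -- j < l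
        have hB : ((L.1.erase l).filter (fun x => x < j)).card = σ := by
          rw [Finset.filter_erase, Finset.erase_eq_of_notMem]
          exact fun h => absurd (Finset.mem_filter.1 h).2 (not_lt.2 hgt.le)
        have hA' : ((insert j L.1).filter (fun x => x < l)).card = A + 1 := by
          rw [Finset.filter_insert, if_pos hgt,
            Finset.card_insert_of_notMem (fun h => hj (Finset.mem_filter.1 h).1)]
        rw [hA', hB]
        ring
    rw [Finset.sum_congr rfl key, ← Finset.smul_sum]
    have hsum : ∑ l ∈ L.1, (if h : l ∈ insert j L.1 then
          ((-1 : ℤ) ^ ((insert j L.1).filter (fun x => x < l)).card * (k l : ℤ)) •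
            a ⟨(insert j L.1).erase l, by
              rw [Finset.card_erase_of_mem h, hL']; rfl⟩ else 0)
        = -(if h : j ∈ insert j L.1 then
          ((-1 : ℤ) ^ ((insert j L.1).filter (fun x => x < j)).card * (k j : ℤ)) •
            a ⟨(insert j L.1).erase j, by
              rw [Finset.card_erase_of_mem h, hL']; rfl⟩ else 0) := by
      exact eq_neg_of_add_eq_zero_right ha'
    rw [hsum, dif_pos (Finset.mem_insert_self j L.1)]
    have hfj : ((insert j L.1).filter (fun x => x < j)).card = σ := by
      rw [Finset.filter_insert, if_neg (lt_irrefl j)]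
    have hidx2 : a ⟨(insert j L.1).erase j, by
          rw [Finset.card_erase_of_mem (Finset.mem_insert_self j L.1), hL']; rfl⟩ = a L := by
      congr 1
      exact Subtype.ext (Finset.erase_insert hj)
    rw [hfj, hidx2, smul_neg, smul_smul, ← neg_smul]
    congr 1
    have h2 : -(-(-1 : ℤ) ^ σ * ((-1) ^ σ * (k j : ℤ))) = (-1 : ℤ) ^ (σ + σ) * (k j : ℤ) := by
      ring
    rw [h2, Even.neg_one_pow ⟨σ, rfl⟩, one_mul]

/-- Lemma `aff5` of the paper: for a coefficient module `M` over `ℤ_p`,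
every closed form `a ∈ K^i(k, M)` with `k ≠ 0` becomes exact after multiplication by
`p^{N(k)}`, where `N(k) = min { v_p(k_j) : k_j ≠ 0 }`, with a primitive of the same
monomial shape. -/
theorem statement0 (p : ℕ) [Fact p.Prime] (M : Type*) [AddCommGroup M]
    [Module ℤ_[p] M] (n : ℕ) (hn : 1 ≤ n) (k : Fin n → ℕ) (hk : k ≠ 0)
    (i : ℕ) (hi : i + 1 ≤ n)
    (a : Kform n (i + 1) M) (ha : Kd k a = 0) :
    ∃ b : Kform n i M,
      Kd k b = fun L =>
        ((p : ℤ_[p]) ^ sInf {N : ℕ | ∃ j, k j ≠ 0 ∧ padicValNat p (k j) = N}) • a L := by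
  obtain ⟨j0, hj0⟩ : ∃ j, k j ≠ 0 := Function.ne_iff.mp hk
  set S : Set ℕ := {N : ℕ | ∃ j, k j ≠ 0 ∧ padicValNat p (k j) = N} with hS
  have hSne : S.Nonempty := ⟨padicValNat p (k j0), j0, hj0, rfl⟩
  obtain ⟨j, hkj, hval⟩ := Nat.sInf_mem hSne
  set N := sInf S with hN
  have hp : p.Prime := Fact.out
  set m : ℕ := ordCompl[p] (k j) with hm
  have hfact : p ^ N * m = k j := by
    rw [hm, ← hval, ← Nat.factorization_def _ hp]
    exact Nat.ordProj_mul_ordCompl_eq_self _ _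
  have hmd : ¬ p ∣ m := Nat.not_dvd_ordCompl hp hkj
  have hum : IsUnit (m : ℤ_[p]) := by
    refine PadicInt.isUnit_iff.mpr (le_antisymm (PadicInt.norm_le_one _) (not_lt.mp fun h => hmd ?_))
    have := (PadicInt.norm_int_lt_one_iff_dvd (m : ℤ)).mp (by push_cast at h ⊢; exact h)
    exact_mod_cast this
  obtain ⟨u, hu⟩ := hum
  refine ⟨fun J => ((u⁻¹ : ℤ_[p]ˣ) : ℤ_[p]) • Khomotopy j a J, ?_⟩
  funext L
  have hlin : Kd k (fun J => ((u⁻¹ : ℤ_[p]ˣ) : ℤ_[p]) • Khomotopy j a J) L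
      = ((u⁻¹ : ℤ_[p]ˣ) : ℤ_[p]) • Kd k (Khomotopy j a) L := by
    rw [Kd, Kd, Finset.smul_sum]
    exact Finset.sum_congr rfl fun x _ => smul_comm _ _ _
  rw [hlin, Kd_homotopy k j a ha]
  show ((u⁻¹ : ℤ_[p]ˣ) : ℤ_[p]) • ((k j : ℤ) • a L) = ((p : ℤ_[p]) ^ N) • a L
  rw [← Int.cast_smul_eq_zsmul ℤ_[p], smul_smul]
  congr 1
  have : ((k j : ℤ) : ℤ_[p]) = ((u : ℤ_[p]) * (p : ℤ_[p]) ^ N) := by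
    rw [hu]
    push_cast [← hfact]
    ring
  rw [this, ← mul_assoc, Units.inv_mul, one_mul]
end

section
/- Let M be an additive abelian group, let n ≥ 1, let k = (k_1, …, k_n) ∈ ℕⁿ, and let 1 ≤ i ≤ n. If a ∈ K^i(k, M) satisfies d a = 0, then for every index j with 1 ≤ j ≤ n there exists b ∈ K^{i−1}(k, M) with d b = k_j • a. (This is the key homotopy step in the proof of Lemma aff5 of the paper: contracting a closed monomial form against the j-th coordinate direction produces, up to the factor k_j, a primitive of the same monomial shape.) -/
lemma Kform_congr {n i : ℕ} {M : Type*} (a : Kform n i M) {s t : Finset (Fin n)}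
    (h : s = t) (hs : s.card = i) (ht : t.card = i) :
    a ⟨s, hs⟩ = a ⟨t, ht⟩ := by subst h; rfl

lemma Kd_apply {n : ℕ} {M : Type*} [AddCommGroup M] (k : Fin n → ℕ) {i : ℕ}
    (a : Kform n i M) (L : {s : Finset (Fin n) // s.card = i + 1}) :
    Kd k a L = ∑ l ∈ L.1, (if h : l ∈ L.1 then
      ((-1 : ℤ) ^ (L.1.filter (fun x => x < l)).card * (k l : ℤ)) •
        a ⟨L.1.erase l, by rw [Finset.card_erase_of_mem h, L.2]; rfl⟩ else 0) := by
  rw [← Finset.sum_attach L.1 (fun l => if h : l ∈ L.1 then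
      ((-1 : ℤ) ^ (L.1.filter (fun x => x < l)).card * (k l : ℤ)) •
        a ⟨L.1.erase l, by rw [Finset.card_erase_of_mem h, L.2]; rfl⟩ else 0)]
  exact Finset.sum_congr rfl fun x _ => by rw [dif_pos x.2]

/-- if `a ∈ K^i(k, M)` is closed, then for every index `j` the element
`k_j • a` is exact, with primitive of the same monomial shape. -/
theorem statement1 (M : Type*) [AddCommGroup M] (n : ℕ) (hn : 1 ≤ n)
    (k : Fin n → ℕ) (i : ℕ) (hi : i + 1 ≤ n)
    (a : Kform n (i + 1) M) (ha : Kd k a = 0) (j : Fin n) :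
    ∃ b : Kform n i M, Kd k b = fun L => k j • a L := by
  classical
  refine ⟨fun S => if hj : j ∈ S.1 then 0 else
    ((-1 : ℤ) ^ (S.1.filter (fun x => x < j)).card) •
      a ⟨insert j S.1, by rw [Finset.card_insert_of_notMem hj, S.2]⟩, ?_⟩
  funext L
  rw [Kd_apply]
  by_cases hjL : j ∈ L.1
  · -- the only surviving term is `l = j`
    rw [Finset.sum_eq_single_of_mem j hjL (fun l hl hlj => by
      rw [dif_pos hl, dif_pos (Finset.mem_erase.2 ⟨Ne.symm hlj, hjL⟩), smul_zero])]
    rw [dif_pos hjL, dif_neg (Finset.notMem_erase j L.1)]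
    rw [Kform_congr a (Finset.insert_erase hjL) _ L.2, smul_smul]
    have hq : ((L.1.erase j).filter (fun x => x < j)).card
        = (L.1.filter (fun x => x < j)).card := by
      rw [Finset.filter_erase, Finset.erase_eq_of_notMem (by simp)]
    rw [hq]
    have : ((-1 : ℤ) ^ (L.1.filter (fun x => x < j)).card * (k j : ℤ)) *
        (-1 : ℤ) ^ (L.1.filter (fun x => x < j)).card = (k j : ℤ) := by
      rw [mul_comm, ← mul_assoc, ← pow_add, ← two_mul, pow_mul]
      norm_num
    rw [this, natCast_zsmul]
  · -- use closedness at `insert j L.1`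
    have hcard : (insert j L.1).card = i + 1 + 1 := by
      rw [Finset.card_insert_of_notMem hjL, L.2]
    have key := congrFun ha ⟨insert j L.1, hcard⟩
    rw [Kd_apply, Pi.zero_apply, Finset.sum_insert hjL] at key
    set r := (L.1.filter (fun x => x < j)).card with hr
    have hjterm : (if h : j ∈ insert j L.1 then
        ((-1 : ℤ) ^ ((insert j L.1).filter (fun x => x < j)).card * (k j : ℤ)) •
          a ⟨(insert j L.1).erase j, by
            rw [Finset.card_erase_of_mem h, hcard]; rfl⟩ else 0)
        = ((-1 : ℤ) ^ r * (k j : ℤ)) • a L := by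
      rw [dif_pos (Finset.mem_insert_self j L.1)]
      rw [Kform_congr a (Finset.erase_insert hjL) _ L.2]
      congr 2
      rw [Finset.filter_insert, if_neg (lt_irrefl j)]
    rw [hjterm] at key
    have key2 : ((-1 : ℤ) ^ r * (k j : ℤ)) • a L
        = -∑ l ∈ L.1, (if h : l ∈ insert j L.1 then
          ((-1 : ℤ) ^ ((insert j L.1).filter (fun x => x < l)).card * (k l : ℤ)) •
            a ⟨(insert j L.1).erase l, by
              rw [Finset.card_erase_of_mem h, hcard]; rfl⟩ else 0) :=
      eq_neg_of_add_eq_zero_left key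
    have hkj : (k j : ℤ) • a L
        = (-1 : ℤ) ^ r • (((-1 : ℤ) ^ r * (k j : ℤ)) • a L) := by
      rw [smul_smul, ← mul_assoc, ← pow_add, ← two_mul, pow_mul]
      norm_num
    rw [← natCast_zsmul, hkj, key2, smul_neg, Finset.smul_sum,
      ← Finset.sum_neg_distrib]
    refine Finset.sum_congr rfl fun l hl => ?_
    have hlj : l ≠ j := fun h => hjL (h ▸ hl)
    have hjel : j ∉ L.1.erase l := fun h => hjL (Finset.mem_of_mem_erase h)
    have hc1 : (insert j (L.1.erase l)).card = i + 1 := by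
      rw [Finset.card_insert_of_notMem hjel, Finset.card_erase_of_mem hl, L.2]
      omega
    have hc2 : ((insert j L.1).erase l).card = i + 1 := by
      rw [Finset.card_erase_of_mem (Finset.mem_insert_of_mem hl), hcard]
      omega
    rw [dif_pos hl, dif_neg hjel, dif_pos (Finset.mem_insert_of_mem hl)]
    show ((-1 : ℤ) ^ (L.1.filter (fun x => x < l)).card * (k l : ℤ)) •
        (((-1 : ℤ) ^ ((L.1.erase l).filter (fun x => x < j)).card) •
          a ⟨insert j (L.1.erase l), hc1⟩)
      = -((-1 : ℤ) ^ r • (((-1 : ℤ) ^ ((insert j L.1).filter (fun x => x < l)).card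
          * (k l : ℤ)) • a ⟨(insert j L.1).erase l, hc2⟩))
    rw [Kform_congr a (Finset.erase_insert_of_ne (Ne.symm hlj)) hc2 hc1]
    rw [smul_smul, smul_smul, ← neg_smul]
    congr 1
    -- sign bookkeeping
    set p := (L.1.filter (fun x => x < l)).card with hp
    have hq' : ((L.1.erase l).filter (fun x => x < j)).card
        = ((L.1.filter (fun x => x < j)).erase l).card := by
      rw [Finset.filter_erase]
    have hp' : (insert j L.1).filter (fun x => x < l)
        = if j < l then insert j (L.1.filter (fun x => x < l)) else
          L.1.filter (fun x => x < l) := Finset.filter_insert _ _ _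
    rcases lt_trichotomy l j with h | h | h
    · have hq : ((L.1.erase l).filter (fun x => x < j)).card + 1 = r := by
        rw [hq', hr]
        exact Finset.card_erase_add_one (Finset.mem_filter.2 ⟨hl, h⟩)
      have hpp : ((insert j L.1).filter (fun x => x < l)).card = p := by
        rw [hp', if_neg (asymm h), hp]
      rw [hpp, ← hq, pow_succ]
      ring
    · exact absurd h hlj
    · have hq : ((L.1.erase l).filter (fun x => x < j)).card = r := by
        have hnm : l ∉ L.1.filter (fun x => x < j) :=
          fun hm => asymm h (Finset.mem_filter.1 hm).2
        rw [hq', hr, Finset.erase_eq_of_notMem hnm]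
      have hpp : ((insert j L.1).filter (fun x => x < l)).card = p + 1 := by
        rw [hp', if_pos h, Finset.card_insert_of_notMem
          (fun hm => hjL (Finset.mem_filter.1 hm).1), hp]
      rw [hpp, hq, pow_succ]
      ring
end

section
/- Let p be a prime, let A be a commutative ring that is an algebra over the p-adic integers ℤ_p, and let π ∈ A satisfy π^{p−1} ∈ p·A. Then for every integer m ≥ 1 there exists a ∈ A with π^m = m · π · a; that is, π^m lies in the ideal m·π·A. (This is the divisibility [p̃]^m ∈ [p̃]·m·A_cris used in the proof of Lemma 2.3 (Lemma AFF3) of the paper, with π playing the role of the Teichmüller lift [p̃], which satisfies [p̃]^{p−1} ∈ p·A_cris.) -/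
lemma aux_pow_ge (p k : ℕ) (hp : 2 ≤ p) : (p - 1) * k + 1 ≤ p ^ k := by
  induction k with
  | zero => simp
  | succ k ih =>
    have h1 : 1 ≤ p ^ k := Nat.one_le_pow _ _ (by omega)
    have : p ^ (k + 1) = p ^ k * p := pow_succ p k
    nlinarith [Nat.sub_add_cancel (by omega : 1 ≤ p)]

/-- the divisibility `[p̃]^m ∈ [p̃]·m·A_cris` from Lemma 2.3 of the paper:
if `A` is a `ℤ_p`-algebra and `π ∈ A` satisfies `π^{p−1} ∈ p·A`, then for every `m ≥ 1`
one has `π^m ∈ m·π·A`. -/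
theorem statement3 (p : ℕ) [Fact p.Prime] (A : Type*) [CommRing A] [Algebra ℤ_[p] A]
    (π : A) (hπ : ∃ c : A, π ^ (p - 1) = (p : A) * c)
    (m : ℕ) (hm : 1 ≤ m) :
    ∃ a : A, π ^ m = (m : A) * π * a := by
  obtain ⟨c, hc⟩ := hπ
  have hp : 2 ≤ p := (Fact.out : p.Prime).two_le
  set k := m.factorization p with hk
  set u := m / p ^ k with hu
  have hm0 : m ≠ 0 := by omega
  have hmu : p ^ k * u = m := Nat.ordProj_mul_ordCompl_eq_self m p
  have hndvd : ¬ p ∣ u := Nat.not_dvd_ordCompl Fact.out hm0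
  -- u is a unit in ℤ_[p], hence in A
  have hnorm : ‖(u : ℤ_[p])‖ = 1 := by
    have hle : ‖(u : ℤ_[p])‖ ≤ 1 := PadicInt.norm_le_one _
    have h2 : ¬ ‖((u : ℤ) : ℤ_[p])‖ < 1 := by
      rw [PadicInt.norm_int_lt_one_iff_dvd]
      exact fun h => hndvd (by exact_mod_cast h)
    push_cast at h2
    exact le_antisymm hle (not_lt.mp h2)
  have hunit : IsUnit ((u : ℤ_[p])) := PadicInt.isUnit_iff.mpr hnorm
  have hunitA : IsUnit ((u : A)) := by
    have := hunit.map (algebraMap ℤ_[p] A)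
    rwa [map_natCast] at this
  obtain ⟨v, hv⟩ := hunitA.exists_right_inv
  -- exponent bookkeeping
  have hkm : (p - 1) * k + 1 ≤ m := by
    calc (p - 1) * k + 1 ≤ p ^ k := aux_pow_ge p k hp
    _ ≤ p ^ k * u := Nat.le_mul_of_pos_right _ (Nat.pos_of_ne_zero (by
        intro h; rw [h, mul_zero] at hmu; exact hm0 hmu.symm))
    _ = m := hmu
  refine ⟨v * c ^ k * π ^ (m - 1 - (p - 1) * k), ?_⟩
  have hcast : (m : A) = (p : A) ^ k * (u : A) := by
    rw [← hmu]; push_cast; ring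
  have hpk : ((p : A)) ^ k * c ^ k = (π ^ (p - 1)) ^ k := by
    rw [hc, mul_pow]
  calc π ^ m = π ^ ((p - 1) * k) * π ^ (m - 1 - (p - 1) * k) * π := by
        rw [← pow_add, ← pow_succ]; congr 1; omega
    _ = (π ^ (p - 1)) ^ k * π ^ (m - 1 - (p - 1) * k) * π := by rw [pow_mul]
    _ = (p : A) ^ k * c ^ k * π ^ (m - 1 - (p - 1) * k) * π := by rw [hpk]
    _ = (p : A) ^ k * ((u : A) * v) * c ^ k * π ^ (m - 1 - (p - 1) * k) * π := by
        rw [hv]; ring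
    _ = (m : A) * π * (v * c ^ k * π ^ (m - 1 - (p - 1) * k)) := by
        rw [hcast]; ring
end

section
/- Let p be a prime, let A be a commutative ring that is an algebra over the p-adic integers ℤ_p, let s ≥ 1 be an integer, and let π ∈ A satisfy π^{s} ∈ p·A. Let n ≥ 1, let k = (k_1, …, k_n) ∈ ℕⁿ with k ≠ (0,…,0), let |k| = k_1 + ⋯ + k_n, and let 1 ≤ i ≤ n. Then for every a ∈ K^i(k, A) with d a = 0 there exists b ∈ K^{i−1}(k, A) with d b = π^{s·|k|} • a. (This is the quantitative version, in monomial weight k, of Remark 2.4 (Remark AFF3.1) of the paper: for β > α the image of H^i_dR(R^+_β) → H^i_dR(R^+_α), i ≥ 1, is killed by a power of p depending only on β − α, with π playing the role of [p̃^{β−α}].) -/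
/-!
Contraction `ι_j` with `dT_j / T_j` satisfies Cartan's formula `d ι_j + ι_j d = k_j` on the
weight-`k` piece, so a closed form `a` is `k_j`-exact: `k_j a = d (ι_j a)`. Choosing `j` with
`k_j ≠ 0`, the `p`-adic valuation of `k_j` is less than `k_j ≤ |k|`, so `k_j` divides `p ^ |k|`
in `ℤ_p`, and `p ^ |k|` divides `π ^ (s |k|)` in `A`.
-/

open Finset

/-- `(-1) ^ t` where `x` is the `t`-th smallest element of `insert x S` (counting from `0`). -/
def orderSign {α : Type*} [LinearOrder α] (S : Finset α) (x : α) : ℤ :=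
  (-1) ^ #{y ∈ S | y < x}

section OrderSign

variable {α : Type*} [LinearOrder α] {S : Finset α} {x y : α}

lemma orderSign_mul_self (S : Finset α) (x : α) : orderSign S x * orderSign S x = 1 := by
  simp [orderSign, ← mul_pow]

lemma orderSign_insert_self (S : Finset α) (x : α) :
    orderSign (insert x S) x = orderSign S x := by
  rw [orderSign, filter_insert, if_neg (lt_irrefl x), orderSign]

lemma orderSign_erase_of_lt (hy : y ∈ S) (h : y < x) :
    orderSign (S.erase y) x = -orderSign S x := by
  have hmem : y ∈ {z ∈ S | z < x} := mem_filter.2 ⟨hy, h⟩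
  rw [orderSign, filter_erase, card_erase_of_mem hmem, orderSign,
    ← Nat.sub_add_cancel (card_pos.2 ⟨y, hmem⟩), pow_succ]
  simp

lemma orderSign_erase_of_not_lt (h : ¬y < x) : orderSign (S.erase y) x = orderSign S x := by
  have hy : y ∉ {z ∈ S | z < x} := fun hy => h (mem_filter.1 hy).2
  rw [orderSign, filter_erase, erase_eq_of_notMem hy, orderSign]

lemma orderSign_erase_mul_orderSign_erase (hx : x ∈ S) (hy : y ∈ S) (hxy : x ≠ y) :
    orderSign (S.erase x) y * orderSign (S.erase y) x = -(orderSign S x * orderSign S y) := by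
  rcases hxy.lt_or_gt with h | h
  · rw [orderSign_erase_of_lt hx h, orderSign_erase_of_not_lt h.not_gt]; ring
  · rw [orderSign_erase_of_not_lt h.not_gt, orderSign_erase_of_lt hy h]; ring

end OrderSign

namespace Kform

variable {n i : ℕ} {M : Type*} [AddCommGroup M]

noncomputable def extend (a : Kform n i M) (S : Finset (Fin n)) : M :=
  if h : S.card = i then a ⟨S, h⟩ else 0

lemma extend_of_card_eq (a : Kform n i M) {S : Finset (Fin n)} (h : S.card = i) :
    a.extend S = a ⟨S, h⟩ :=
  dif_pos h

@[simp]
lemma extend_val (a : Kform n i M) (J : {S : Finset (Fin n) // S.card = i}) :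
    a.extend J.1 = a J :=
  dif_pos J.2

@[simp]
lemma extend_zero (S : Finset (Fin n)) : (0 : Kform n i M).extend S = 0 := by
  simp [extend]

lemma Kd_apply (k : Fin n → ℕ) (a : Kform n i M) (L : {S : Finset (Fin n) // S.card = i + 1}) :
    Kd k a L = ∑ t ∈ L.1, (orderSign L.1 t * k t) • a.extend (L.1.erase t) := by
  rw [Kd, ← sum_attach L.1]
  refine sum_congr rfl fun t _ => ?_
  rw [extend_of_card_eq]
  rfl

/-- Interior product with `dT_j / T_j`. -/
noncomputable def contract (j : Fin n) (a : Kform n (i + 1) M) : Kform n i M := fun J =>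
  if j ∈ J.1 then 0 else orderSign J.1 j • a.extend (insert j J.1)

lemma extend_contract (j : Fin n) (a : Kform n (i + 1) M) {S : Finset (Fin n)}
    (h : S.card = i) :
    (contract j a).extend S = if j ∈ S then 0 else orderSign S j • a.extend (insert j S) := by
  rw [extend_of_card_eq _ h, contract]

@[simp]
lemma contract_zero (j : Fin n) : contract j (0 : Kform n (i + 1) M) = 0 := by
  funext J
  simp [contract]

lemma Kd_contract_apply_of_mem (k : Fin n → ℕ) {j : Fin n} (a : Kform n (i + 1) M)
    {L : {S : Finset (Fin n) // S.card = i + 1}} (hj : j ∈ L.1) :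
    Kd k (contract j a) L = k j • a L := by
  rw [Kd_apply, sum_eq_single_of_mem j hj]
  · rw [extend_contract _ _ (by rw [card_erase_of_mem hj, L.2]; rfl), if_neg (notMem_erase j L.1),
      insert_erase hj, smul_smul, mul_right_comm, orderSign_erase_of_not_lt (lt_irrefl j),
      orderSign_mul_self, one_mul, extend_val, natCast_zsmul]
  · intro t ht htj
    rw [extend_contract _ _ (by rw [card_erase_of_mem ht, L.2]; rfl),
      if_pos (mem_erase.2 ⟨Ne.symm htj, hj⟩), smul_zero]

lemma Kd_contract_apply_add_of_notMem (k : Fin n → ℕ) {j : Fin n} (a : Kform n (i + 1) M)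
    {L : {S : Finset (Fin n) // S.card = i + 1}} (hj : j ∉ L.1) :
    Kd k (contract j a) L +
        orderSign L.1 j • Kd k a ⟨insert j L.1, by rw [card_insert_of_notMem hj, L.2]⟩ =
      k j • a L := by
  set U := insert j L.1
  have hjU : j ∈ U := mem_insert_self j L.1
  have hUj : U.erase j = L.1 := erase_insert hj
  -- the `j`-term of `(d a)_U` is `± k_j a_L`; the other terms cancel those of `(d ι_j a)_L`
  rw [Kd_apply, Kd_apply]
  dsimp only
  rw [sum_insert hj, hUj, orderSign_insert_self, smul_add, smul_smul,
    ← mul_assoc, orderSign_mul_self, one_mul, extend_val, natCast_zsmul, ← add_assoc,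
    add_right_comm, add_eq_right, smul_sum, ← sum_add_distrib]
  refine sum_eq_zero fun t ht => ?_
  have htj : t ≠ j := fun h => hj (h ▸ ht)
  have hUt : U.erase t = insert j (L.1.erase t) := erase_insert_of_ne htj.symm
  have hsign :
      orderSign L.1 t * orderSign (L.1.erase t) j = -(orderSign L.1 j * orderSign U t) := by
    have := orderSign_erase_mul_orderSign_erase hjU (mem_insert_of_mem ht) htj.symm
    rwa [hUj, hUt, orderSign_insert_self, orderSign_insert_self] at this
  rw [extend_contract _ _ (by rw [card_erase_of_mem ht, L.2]; rfl),
    if_neg (fun h => hj (mem_of_mem_erase h)), hUt, smul_smul, smul_smul, ← add_smul]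
  convert zero_smul ℤ _
  linear_combination (k t : ℤ) * hsign

theorem Kd_contract_add_contract_Kd (k : Fin n → ℕ) (j : Fin n) (a : Kform n (i + 1) M) :
    Kd k (contract j a) + contract j (Kd k a) = k j • a := by
  funext L
  rw [Pi.add_apply, Pi.smul_apply]
  by_cases hj : j ∈ L.1
  · rw [Kd_contract_apply_of_mem k a hj, contract, if_pos hj, add_zero]
  · rw [← Kd_contract_apply_add_of_notMem k a hj, contract, if_neg hj, extend_of_card_eq]

theorem Kd_contract_of_Kd_eq_zero (k : Fin n → ℕ) (j : Fin n) {a : Kform n (i + 1) M}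
    (ha : Kd k a = 0) : Kd k (contract j a) = k j • a := by
  simpa [ha] using Kd_contract_add_contract_Kd k j a

end Kform

lemma Kd_smul {n i : ℕ} {R M : Type*} [Semiring R] [AddCommGroup M] [Module R M]
    (k : Fin n → ℕ) (r : R) (a : Kform n i M) : Kd k (r • a) = r • Kd k a := by
  funext L
  simp only [Kd, Pi.smul_apply, smul_sum, smul_comm r]

namespace PadicInt

variable {p : ℕ} [Fact p.Prime]

lemma dvd_pow_of_valuation_le {x : ℤ_[p]} (hx : x ≠ 0) {K : ℕ} (h : x.valuation ≤ K) :
    x ∣ (p : ℤ_[p]) ^ K := by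
  rw [unitCoeff_spec hx]
  exact (Units.isUnit _).mul_left_dvd.2 (pow_dvd_pow _ h)

lemma valuation_natCast (m : ℕ) : (m : ℤ_[p]).valuation = padicValNat p m := by
  rw [← Nat.cast_inj (R := ℤ), ← valuation_coe]
  simp

lemma natCast_dvd_pow_of_le {m K : ℕ} (hm : m ≠ 0) (h : m ≤ K) :
    (m : ℤ_[p]) ∣ (p : ℤ_[p]) ^ K :=
  dvd_pow_of_valuation_le (Nat.cast_ne_zero.2 hm) <| by
    rw [valuation_natCast]
    exact (padicValNat_le_nat_log m).trans ((Nat.log_le_self p m).trans h)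

end PadicInt

theorem statement6_general (p : ℕ) [Fact p.Prime] (A : Type*) [CommRing A] [Algebra ℤ_[p] A]
    (s : ℕ) (π : A) (hπ : ∃ c : A, π ^ s = (p : A) * c)
    (n : ℕ) (k : Fin n → ℕ) (hk : k ≠ 0)
    (i : ℕ)
    (a : Kform n (i + 1) A) (ha : Kd k a = 0) :
    ∃ b : Kform n i A, Kd k b = fun L => π ^ (s * ∑ j, k j) * a L := by
  obtain ⟨c, hc⟩ := hπ
  obtain ⟨j, hj⟩ : ∃ j, k j ≠ 0 := Function.ne_iff.1 hk
  set K := ∑ j, k j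
  obtain ⟨w, hw⟩ : (k j : ℤ_[p]) ∣ (p : ℤ_[p]) ^ K :=
    PadicInt.natCast_dvd_pow_of_le hj (single_le_sum (fun t _ => (k t).zero_le) (mem_univ j))
  have hπK : π ^ (s * K) = (algebraMap ℤ_[p] A w * c ^ K) * k j := by
    rw [pow_mul, hc, mul_pow, ← map_natCast (algebraMap ℤ_[p] A) p, ← map_pow, hw, map_mul,
      map_natCast]
    ring
  refine ⟨(algebraMap ℤ_[p] A w * c ^ K) • Kform.contract j a, ?_⟩
  rw [Kd_smul, Kform.Kd_contract_of_Kd_eq_zero k j ha, ← Nat.cast_smul_eq_nsmul A, smul_smul,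
    ← hπK]
  rfl

/-- quantitative version, Remark 2.4 of the paper, in monomial weight `k`:
if `A` is a `ℤ_p`-algebra, `s ≥ 1`, and `π ∈ A` satisfies `π^s ∈ p·A`, then every closed
`a ∈ K^i(k, A)` with `k ≠ 0` becomes exact after multiplication by `π^{s·|k|}`. -/
theorem statement6 (p : ℕ) [Fact p.Prime] (A : Type*) [CommRing A] [Algebra ℤ_[p] A]
    (s : ℕ) (hs : 1 ≤ s) (π : A) (hπ : ∃ c : A, π ^ s = (p : A) * c)
    (n : ℕ) (hn : 1 ≤ n) (k : Fin n → ℕ) (hk : k ≠ 0)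
    (i : ℕ) (hi : i + 1 ≤ n)
    (a : Kform n (i + 1) A) (ha : Kd k a = 0) :
    ∃ b : Kform n i A, Kd k b = fun L => π ^ (s * ∑ j, k j) * a L :=
  statement6_general p A s π hπ n k hk i a ha
end

section
/- Let p be a prime, let A be a commutative ring, and let π ∈ A satisfy π^{p−1} ∈ p·A. Let n ≥ 1, let j ≥ 1 and m ≥ (p−1)·j be integers, let P = MvPolynomial (Fin n) A, and let φ : P → P be the A-algebra homomorphism determined by φ(X_t) = π^m · X_t for all t. Then the induced map on Kähler differentials Ω¹_{P/A} → Ω¹_{P/A} (functoriality of Kähler differentials applied to φ over the base A) has image contained in p^j • Ω¹_{P/A}: for every ω ∈ Ω¹_{P/A} there exists η ∈ Ω¹_{P/A} with φ_*(ω) = p^j • η. (This expresses the vanishing modulo p^j, for m ≥ (p−1)j, of the transition maps on integral 1-forms Ω¹(R^+_{α+m})/p^j → Ω¹(R^+_α)/p^j from Remark 4.1 (Remark aff4) of the paper.) -/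
/-!
Since `(p : A) ∣ π ^ (p - 1)`, the scalar `π ^ m` is divisible by `p ^ j`, so each
`d(φ X_t) = π ^ m • dX_t` lies in the submodule `p ^ j • Ω¹`. By the Leibniz rule the
preimage of a submodule under a derivation is closed under products, so `d(φ x)` lies there
for every polynomial `x`; as the `dx` span `Ω¹`, so does the whole image of `φ_*`.
-/

open MvPolynomial
open scoped Pointwise

theorem pow_dvd_pow_of_dvd_pow {M : Type*} [CommMonoid M] {a b : M} {k j m : ℕ}
    (h : a ∣ b ^ k) (hm : k * j ≤ m) : a ^ j ∣ b ^ m :=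
  (pow_dvd_pow_of_dvd h j).trans (pow_mul b k j ▸ pow_dvd_pow b hm)

theorem Derivation.mem_of_mem_adjoin {R A M : Type*} [CommSemiring R] [CommSemiring A]
    [Algebra R A] [AddCommMonoid M] [Module A M] [Module R M] [IsScalarTower R A M]
    (D : Derivation R A M) (S : Submodule A M) {s : Set A} (hs : ∀ a ∈ s, D a ∈ S)
    {a : A} (ha : a ∈ Algebra.adjoin R s) : D a ∈ S := by
  induction ha using Algebra.adjoin_induction with
  | mem x hx => exact hs x hx
  | algebraMap r => simp
  | add x y _ _ hx hy => rw [map_add]; exact S.add_mem hx hy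
  | mul x y _ _ hx hy =>
    rw [Derivation.leibniz]
    exact S.add_mem (S.smul_mem x hy) (S.smul_mem y hx)

theorem Derivation.apply_algHom_mem_of_apply_X_mem {R A M σ : Type*} [CommSemiring R]
    [CommSemiring A] [Algebra R A] [AddCommMonoid M] [Module A M] [Module R M]
    [IsScalarTower R A M] (D : Derivation R A M) (S : Submodule A M) (f : MvPolynomial σ R →ₐ[R] A)
    (hX : ∀ i, D (f (X i)) ∈ S) (x : MvPolynomial σ R) : D (f x) ∈ S := by
  refine D.mem_of_mem_adjoin S (s := Set.range (f ∘ X)) (by simpa using hX) ?_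
  rw [Set.range_comp, ← AlgHom.map_adjoin, adjoin_range_X]
  exact ⟨x, trivial, rfl⟩

theorem KaehlerDifferential.map_mem_of_forall_D_algebraMap_mem {A P B : Type*} [CommRing A]
    [CommRing P] [CommRing B] [Algebra A P] [Algebra A B] [Algebra P B] [IsScalarTower A P B]
    [SMulCommClass A P B] (S : Submodule B (Ω[B⁄A]))
    (hS : ∀ x : P, D A B (algebraMap P B x) ∈ S) (ω : Ω[P⁄A]) :
    KaehlerDifferential.map A A P B ω ∈ S := by
  have hspan : Submodule.span P (Set.range (D A P)) ≤
      (S.restrictScalars P).comap (KaehlerDifferential.map A A P B) :=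
    Submodule.span_le.mpr (Set.range_subset_iff.mpr fun x => by simpa using hS x)
  exact hspan (span_range_derivation A P ▸ Submodule.mem_top)

/-- Remark 4.1 of the paper, on 1-forms: if `π^{p−1} ∈ p·A` and
`m ≥ (p−1)·j`, then the map induced on Kähler differentials `Ω¹_{P/A} → Ω¹_{P/A}`
(functoriality of `Ω¹` applied over the base `A`) by the `A`-algebra endomorphism `φ` of
`P = A[X_0,…,X_{n−1}]` with `φ(X_t) = π^m·X_t` has image contained in `p^j • Ω¹_{P/A}`. -/
theorem statement8 (p : ℕ) (A : Type*) [CommRing A]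
    (π : A) (hπ : ∃ c : A, π ^ (p - 1) = (p : A) * c)
    (n j m : ℕ) (hm : (p - 1) * j ≤ m)
    (φ : MvPolynomial (Fin n) A →ₐ[A] MvPolynomial (Fin n) A)
    (hφ : ∀ t : Fin n, φ (X t) = C (π ^ m) * X t)
    (ω : Ω[MvPolynomial (Fin n) A⁄A]) :
    letI : Algebra (MvPolynomial (Fin n) A) (MvPolynomial (Fin n) A) :=
      φ.toRingHom.toAlgebra
    haveI : @IsScalarTower A (MvPolynomial (Fin n) A) (MvPolynomial (Fin n) A) _ Algebra.toSMul _ :=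
      IsScalarTower.of_algebraMap_eq' φ.comp_algebraMap.symm
    haveI : @SMulCommClass A (MvPolynomial (Fin n) A) (MvPolynomial (Fin n) A) _ Algebra.toSMul :=
      @SMulCommClass.mk _ _ _ _ Algebra.toSMul (fun a x y => by
        show a • (φ x * y) = φ x * (a • y)
        exact (mul_smul_comm a (φ x) y).symm)
    ∃ η : Ω[MvPolynomial (Fin n) A⁄A],
      KaehlerDifferential.map A A (MvPolynomial (Fin n) A) (MvPolynomial (Fin n) A) ω
        = p ^ j • η := by
  obtain ⟨b, hb⟩ : (p : A) ^ j ∣ π ^ m := pow_dvd_pow_of_dvd_pow hπ hm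
  have hX : ∀ t, KaehlerDifferential.D A _ (φ (X t)) ∈
      (p : A) ^ j • (⊤ : Submodule (MvPolynomial (Fin n) A) Ω[MvPolynomial (Fin n) A⁄A]) := by
    intro t
    rw [hφ, ← smul_eq_C_mul, Derivation.map_smul, hb, mul_smul]
    exact Submodule.smul_mem_pointwise_smul _ _ ⊤ trivial
  have hD := (KaehlerDifferential.D A _).apply_algHom_mem_of_apply_X_mem _ φ hX
  -- Once `φ` is an algebra structure, `Module P Ω[P⁄A]` has a second instance, so everything
  -- about submodules is settled above and membership is unfolded by hand below.
  let _ : Algebra (MvPolynomial (Fin n) A) (MvPolynomial (Fin n) A) := φ.toRingHom.toAlgebra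
  have _ : @IsScalarTower A (MvPolynomial (Fin n) A) (MvPolynomial (Fin n) A) _ Algebra.toSMul _ :=
    IsScalarTower.of_algebraMap_eq' φ.comp_algebraMap.symm
  have _ : @SMulCommClass A (MvPolynomial (Fin n) A) (MvPolynomial (Fin n) A) _ Algebra.toSMul :=
    @SMulCommClass.mk _ _ _ _ Algebra.toSMul fun a x y => (mul_smul_comm a (φ x) y).symm
  obtain ⟨η, -, hη⟩ := KaehlerDifferential.map_mem_of_forall_D_algebraMap_mem _ hD ω
  refine ⟨η, hη.symm.trans ?_⟩
  change (p : A) ^ j • η = p ^ j • η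
  rw [← Nat.cast_pow, Nat.cast_smul_eq_nsmul]
end
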